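/- arXiv:2604.18766 — 2 statements merged into one kernel-verified Lean document; each statement's English description precedes it below -/
import Mathlib

section
/- For every n ≥ 0, k ≥ 1, every formula α, and every j with 1 ≤ j ≤ k: ⊢_{L_n^k} ∘^j α ↔ ∘^j ¬α. -/
/-- Formulas of the language with ¬, ∘, ∧, ∨, →. -/
inductive Fm : Type
  | atom : Nat → Fm
  | neg : Fm → Fm
  | circ : Fm → Fm
  | conj : Fm → Fm → Fm
  | disj : Fm → Fm → Fm
  | impl : Fm → Fm → Fm

/-- Iterated consistency operator: `circN n α` is ∘^n α. -/
def circN : Nat → Fm → Fm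
  | 0, a => a
  | n + 1, a => Fm.circ (circN n a)

/-- Biimplication α↔β := (α→β)∧(β→α). -/
def Fm.biim (a c : Fm) : Fm := (a.impl c).conj (c.impl a)

/-- Derivability from premises in the Hilbert calculus L_n^k:
L_n^0 := mbCciw + (cc^n) ∘^{n+2}α; L_n^1 := L_n^0 + (cf) + (ce); for k ≥ 2,
L_n^k := L_n^1 + (ip^j) ¬∘^j¬α ↔ ¬∘^jα for all 1 ≤ j < k. -/
inductive Lnk (n k : Nat) (Γ : Set Fm) : Fm → Prop
  | prem {α : Fm} : α ∈ Γ → Lnk n k Γ α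
  | a1 (α β : Fm) : Lnk n k Γ (α.impl (β.impl α))
  | a2 (α β γ : Fm) : Lnk n k Γ ((α.impl (β.impl γ)).impl ((α.impl β).impl (α.impl γ)))
  | a3 (α β : Fm) : Lnk n k Γ ((α.conj β).impl α)
  | a4 (α β : Fm) : Lnk n k Γ ((α.conj β).impl β)
  | a5 (α β : Fm) : Lnk n k Γ (α.impl (β.impl (α.conj β)))
  | a6 (α β : Fm) : Lnk n k Γ (α.impl (α.disj β))
  | a7 (α β : Fm) : Lnk n k Γ (β.impl (α.disj β))
  | a8 (α β γ : Fm) : Lnk n k Γ ((α.impl γ).impl ((β.impl γ).impl ((α.disj β).impl γ)))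
  | a9 (α β : Fm) : Lnk n k Γ (α.disj (α.impl β))
  | tnd (α : Fm) : Lnk n k Γ (α.disj α.neg)
  | bc1 (α β : Fm) : Lnk n k Γ (α.circ.impl (α.impl (α.neg.impl β)))
  | ciw (α : Fm) : Lnk n k Γ (α.circ.disj (α.conj α.neg))
  | ccn (α : Fm) : Lnk n k Γ (circN (n + 2) α)
  | cf (α : Fm) : 1 ≤ k → Lnk n k Γ (α.neg.neg.impl α)
  | ce (α : Fm) : 1 ≤ k → Lnk n k Γ (α.impl α.neg.neg)
  | ip (α : Fm) (j : Nat) : 1 ≤ j → j < k →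
      Lnk n k Γ (Fm.biim (circN j α.neg).neg (circN j α).neg)
  | mp {α β : Fm} : Lnk n k Γ (α.impl β) → Lnk n k Γ α → Lnk n k Γ β

/-! Induction on `j`. The consistency operator is controlled by (ciw) and (bc1): `∘β → ∘γ` is
derivable as soon as `γ ∧ ¬γ` derives both `β` and `¬β`. For `j = 1` this is supplied by (cf) and
(ce), and for `j + 1` by the induction hypothesis together with (ip^j). -/

namespace Lnk

variable {n k : Nat} {Γ : Set Fm}

theorem mono {Δ : Set Fm} {α : Fm} (hs : Γ ⊆ Δ) (h : Lnk n k Γ α) : Lnk n k Δ α := by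
  induction h with
  | prem hm => exact .prem (hs hm)
  | a1 a b => exact .a1 a b
  | a2 a b c => exact .a2 a b c
  | a3 a b => exact .a3 a b
  | a4 a b => exact .a4 a b
  | a5 a b => exact .a5 a b
  | a6 a b => exact .a6 a b
  | a7 a b => exact .a7 a b
  | a8 a b c => exact .a8 a b c
  | a9 a b => exact .a9 a b
  | tnd a => exact .tnd a
  | bc1 a b => exact .bc1 a b
  | ciw a => exact .ciw a
  | ccn a => exact .ccn a
  | cf a h => exact .cf a h
  | ce a h => exact .ce a h
  | ip a j h1 h2 => exact .ip a j h1 h2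
  | mp _ _ ih1 ih2 => exact .mp ih1 ih2

theorem weaken {α β : Fm} (h : Lnk n k Γ β) : Lnk n k (insert α Γ) β :=
  mono (Set.subset_insert _ _) h

theorem assumption {α : Fm} : Lnk n k (insert α Γ) α :=
  .prem (Set.mem_insert _ _)

theorem imp_self (α : Fm) : Lnk n k Γ (α.impl α) :=
  .mp (.mp (.a2 α (α.impl α) α) (.a1 α (α.impl α))) (.a1 α α)

theorem deduction {α β : Fm} (h : Lnk n k (insert α Γ) β) : Lnk n k Γ (α.impl β) := by
  induction h with
  | prem hm =>
    rcases Set.mem_insert_iff.mp hm with rfl | hm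
    · exact imp_self _
    · exact .mp (.a1 _ _) (.prem hm)
  | mp _ _ ih1 ih2 => exact .mp (.mp (.a2 _ _ _) ih1) ih2
  | a1 a b => exact .mp (.a1 _ _) (.a1 a b)
  | a2 a b c => exact .mp (.a1 _ _) (.a2 a b c)
  | a3 a b => exact .mp (.a1 _ _) (.a3 a b)
  | a4 a b => exact .mp (.a1 _ _) (.a4 a b)
  | a5 a b => exact .mp (.a1 _ _) (.a5 a b)
  | a6 a b => exact .mp (.a1 _ _) (.a6 a b)
  | a7 a b => exact .mp (.a1 _ _) (.a7 a b)
  | a8 a b c => exact .mp (.a1 _ _) (.a8 a b c)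
  | a9 a b => exact .mp (.a1 _ _) (.a9 a b)
  | tnd a => exact .mp (.a1 _ _) (.tnd a)
  | bc1 a b => exact .mp (.a1 _ _) (.bc1 a b)
  | ciw a => exact .mp (.a1 _ _) (.ciw a)
  | ccn a => exact .mp (.a1 _ _) (.ccn a)
  | cf a h => exact .mp (.a1 _ _) (.cf a h)
  | ce a h => exact .mp (.a1 _ _) (.ce a h)
  | ip a j h1 h2 => exact .mp (.a1 _ _) (.ip a j h1 h2)

theorem imp_trans {a b c : Fm} (h₁ : Lnk n k Γ (a.impl b)) (h₂ : Lnk n k Γ (b.impl c)) :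
    Lnk n k Γ (a.impl c) :=
  deduction (.mp (weaken h₂) (.mp (weaken h₁) assumption))

theorem disj_elim {a b c : Fm} (hd : Lnk n k Γ (a.disj b)) (h₁ : Lnk n k Γ (a.impl c))
    (h₂ : Lnk n k Γ (b.impl c)) : Lnk n k Γ c :=
  .mp (.mp (.mp (.a8 a b c) h₁) h₂) hd

theorem biim_intro {a b : Fm} (h₁ : Lnk n k Γ (a.impl b)) (h₂ : Lnk n k Γ (b.impl a)) :
    Lnk n k Γ (a.biim b) :=
  .mp (.mp (.a5 _ _) h₁) h₂

theorem biim_mp {a b : Fm} (h : Lnk n k Γ (a.biim b)) : Lnk n k Γ (a.impl b) :=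
  .mp (.a3 _ _) h

theorem biim_mpr {a b : Fm} (h : Lnk n k Γ (a.biim b)) : Lnk n k Γ (b.impl a) :=
  .mp (.a4 _ _) h

theorem biim_symm {a b : Fm} (h : Lnk n k Γ (a.biim b)) : Lnk n k Γ (b.biim a) :=
  biim_intro (biim_mpr h) (biim_mp h)

/-- By (ciw), either `∘γ` holds or `γ ∧ ¬γ` does; in the latter case `∘β` explodes by (bc1). -/
theorem circ_imp_circ {β γ : Fm} (h : Lnk n k Γ ((γ.conj γ.neg).impl β))
    (hneg : Lnk n k Γ ((γ.conj γ.neg).impl β.neg)) : Lnk n k Γ (β.circ.impl γ.circ) := by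
  refine deduction (disj_elim (.ciw γ) (imp_self _) (deduction ?_))
  have hb : Lnk n k (insert (γ.conj γ.neg) (insert β.circ Γ)) β :=
    .mp (weaken (weaken h)) assumption
  have hnb : Lnk n k (insert (γ.conj γ.neg) (insert β.circ Γ)) β.neg :=
    .mp (weaken (weaken hneg)) assumption
  exact .mp (.mp (.mp (.bc1 β γ.circ) (weaken assumption)) hb) hnb

theorem circ_biim_circ_of_biim {β γ : Fm} (h : Lnk n k Γ (β.biim γ))
    (hneg : Lnk n k Γ (β.neg.biim γ.neg)) : Lnk n k Γ (β.circ.biim γ.circ) :=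
  biim_intro
    (circ_imp_circ (imp_trans (.a3 _ _) (biim_mpr h)) (imp_trans (.a4 _ _) (biim_mpr hneg)))
    (circ_imp_circ (imp_trans (.a3 _ _) (biim_mp h)) (imp_trans (.a4 _ _) (biim_mp hneg)))

theorem circ_biim_circ_neg (hk : 1 ≤ k) (α : Fm) : Lnk n k Γ (α.circ.biim α.neg.circ) :=
  biim_intro (circ_imp_circ (imp_trans (.a4 _ _) (.cf α hk)) (.a3 _ _))
    (circ_imp_circ (.a4 _ _) (imp_trans (.a3 _ _) (.ce α hk)))

theorem circN_biim_circN_neg (α : Fm) {j : Nat} (hj₁ : 1 ≤ j) (hj₂ : j ≤ k) :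
    Lnk n k Γ ((circN j α).biim (circN j α.neg)) := by
  induction j, hj₁ using Nat.le_induction with
  | base => exact circ_biim_circ_neg hj₂ α
  | succ m hm ih =>
    have hip : Lnk n k Γ ((circN m α.neg).neg.biim (circN m α).neg) :=
      .ip α m hm (by omega)
    exact circ_biim_circ_of_biim (ih (by omega)) (biim_symm hip)

end Lnk

theorem stmt18_general (n k : Nat) (α : Fm) (j : Nat) (hj1 : 1 ≤ j) (hj2 : j ≤ k) :
    Lnk n k ∅ (Fm.biim (circN j α) (circN j α.neg)) :=
  Lnk.circN_biim_circN_neg α hj1 hj2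

/-- For 1 ≤ j ≤ k, ⊢_{L_n^k} ∘^j α ↔ ∘^j ¬α. -/
theorem stmt18 (n k : Nat) (hk : 1 ≤ k) (α : Fm) (j : Nat) (hj1 : 1 ≤ j) (hj2 : j ≤ k) :
    Lnk n k ∅ (Fm.biim (circN j α) (circN j α.neg)) :=
  stmt18_general n k α j hj1 hj2
end

section
/- Fixed Point Theorem for the hierarchy of Logics of Controlled Consistency: for every n ≥ 0 and every m ≥ n+2, the logics L_n^{n+1} and L_n^m coincide, i.e. for every set of formulas Γ and formula α, Γ ⊢_{L_n^{n+1}} α if and only if Γ ⊢_{L_n^m} α. -/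
/-! In every `L_n^k` the formula `∘^{n+2}α` is a theorem, so by (ciw) and (bc1) the formula
`¬∘^{n+1}α` is equivalent to the clash `∘^nα ∧ ¬∘^nα`, and `¬∘^jα` is explosive for `j ≥ n+2`.
For `j < k` the clashes of `∘^jα` and `∘^j¬α` are interderivable: for `j = 0` by (cf) and (ce),
and in the inductive step (ip^j) transfers the negated half, while (ciw) and the induction
hypothesis give the positive half. Hence as soon as `k > n` every instance of (ip^j) is derivable:
for `j = n+1` through the clashes at level `n < k`, and for `j ≥ n+2` because both sides explode.
So all the logics `L_n^k` with `k > n` coincide. -/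

def Fm.clash (a : Fm) : Fm := a.conj a.neg

theorem circN_add (i j : ℕ) (a : Fm) : circN (i + j) a = circN i (circN j a) := by
  induction i with
  | zero => rw [Nat.zero_add, circN]
  | succ i ih => rw [Nat.succ_add, circN, ih, circN]

namespace Lnk

variable {n k k' : ℕ} {Γ Δ : Set Fm} {a b c : Fm}

theorem transfer (hΓ : Γ ⊆ Δ) (hk : 1 ≤ k → 1 ≤ k')
    (hip : ∀ α j, 1 ≤ j → j < k → Lnk n k' Δ (Fm.biim (circN j α.neg).neg (circN j α).neg))
    (h : Lnk n k Γ a) : Lnk n k' Δ a := by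
  induction h with
  | prem h => exact .prem (hΓ h)
  | mp _ _ ih1 ih2 => exact ih1.mp ih2
  | a1 α β => exact .a1 α β
  | a2 α β γ => exact .a2 α β γ
  | a3 α β => exact .a3 α β
  | a4 α β => exact .a4 α β
  | a5 α β => exact .a5 α β
  | a6 α β => exact .a6 α β
  | a7 α β => exact .a7 α β
  | a8 α β γ => exact .a8 α β γ
  | a9 α β => exact .a9 α β
  | tnd α => exact .tnd α
  | bc1 α β => exact .bc1 α β
  | ciw α => exact .ciw α
  | ccn α => exact .ccn α
  | cf α h1 => exact .cf α (hk h1)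
  | ce α h1 => exact .ce α (hk h1)
  | ip α j h1 h2 => exact hip α j h1 h2

theorem weaken_s19 (hΓ : Γ ⊆ Δ) (h : Lnk n k Γ a) : Lnk n k Δ a :=
  transfer hΓ id (fun α j h1 h2 => .ip α j h1 h2) h

theorem weaken_insert (h : Lnk n k Γ a) : Lnk n k (insert b Γ) a :=
  weaken_s19 (Set.subset_insert _ _) h

theorem mem_insert : Lnk n k (insert a Γ) a := .prem (Set.mem_insert _ _)

theorem imp_self_s19 : Lnk n k Γ (a.impl a) :=
  ((Lnk.a2 a (a.impl a) a).mp (.a1 a (a.impl a))).mp (.a1 a a)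

theorem imp_of (h : Lnk n k Γ a) : Lnk n k Γ (b.impl a) := (Lnk.a1 a b).mp h

theorem imp_intro (h : Lnk n k (insert b Γ) a) : Lnk n k Γ (b.impl a) := by
  induction h with
  | prem h =>
    rcases Set.mem_insert_iff.mp h with rfl | h
    · exact imp_self_s19
    · exact imp_of (.prem h)
  | mp _ _ ih1 ih2 => exact ((Lnk.a2 _ _ _).mp ih1).mp ih2
  | a1 α β => exact imp_of (.a1 α β)
  | a2 α β γ => exact imp_of (.a2 α β γ)
  | a3 α β => exact imp_of (.a3 α β)
  | a4 α β => exact imp_of (.a4 α β)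
  | a5 α β => exact imp_of (.a5 α β)
  | a6 α β => exact imp_of (.a6 α β)
  | a7 α β => exact imp_of (.a7 α β)
  | a8 α β γ => exact imp_of (.a8 α β γ)
  | a9 α β => exact imp_of (.a9 α β)
  | tnd α => exact imp_of (.tnd α)
  | bc1 α β => exact imp_of (.bc1 α β)
  | ciw α => exact imp_of (.ciw α)
  | ccn α => exact imp_of (.ccn α)
  | cf α h1 => exact imp_of (.cf α h1)
  | ce α h1 => exact imp_of (.ce α h1)
  | ip α j h1 h2 => exact imp_of (.ip α j h1 h2)

theorem and_intro (ha : Lnk n k Γ a) (hb : Lnk n k Γ b) : Lnk n k Γ (a.conj b) :=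
  ((Lnk.a5 a b).mp ha).mp hb

theorem and_left (h : Lnk n k Γ (a.conj b)) : Lnk n k Γ a := (Lnk.a3 a b).mp h

theorem and_right (h : Lnk n k Γ (a.conj b)) : Lnk n k Γ b := (Lnk.a4 a b).mp h

theorem or_elim (h : Lnk n k Γ (a.disj b)) (ha : Lnk n k (insert a Γ) c)
    (hb : Lnk n k (insert b Γ) c) : Lnk n k Γ c :=
  (((Lnk.a8 a b c).mp (imp_intro ha)).mp (imp_intro hb)).mp h

theorem biim_intro_s19 (hab : Lnk n k (insert a Γ) b) (hba : Lnk n k (insert b Γ) a) :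
    Lnk n k Γ (a.biim b) :=
  and_intro (imp_intro hab) (imp_intro hba)

theorem explosion (hc : Lnk n k Γ a.circ) (ha : Lnk n k Γ a) (hn : Lnk n k Γ a.neg) :
    Lnk n k Γ b :=
  (((Lnk.bc1 a b).mp hc).mp ha).mp hn

theorem explosion_of_clash (hc : Lnk n k Γ a.circ) (h : Lnk n k Γ a.clash) : Lnk n k Γ b :=
  explosion hc (and_left h) (and_right h)

theorem circN_of_le {j : ℕ} (hj : n + 2 ≤ j) : Lnk n k Γ (circN j a) := by
  obtain ⟨i, rfl⟩ := Nat.exists_eq_add_of_le hj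
  rw [circN_add]
  exact .ccn _

theorem of_neg_circN {j : ℕ} (hj : n + 2 ≤ j) (h : Lnk n k Γ (circN j a).neg) : Lnk n k Γ b :=
  explosion (circN_of_le (j := j + 1) (by omega)) (circN_of_le hj) h

theorem neg_circN_succ_of_clash {j : ℕ} (h : Lnk n k Γ (circN j a).clash) :
    Lnk n k Γ (circN (j + 1) a).neg :=
  or_elim (.tnd (circN (j + 1) a)) (explosion_of_clash mem_insert (weaken_insert h)) mem_insert

theorem clash_of_neg_circN_succ (h : Lnk n k Γ (circN (n + 1) a).neg) :
    Lnk n k Γ (circN n a).clash :=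
  or_elim (.ciw (circN n a))
    (explosion (circN_of_le (j := n + 2) le_rfl) mem_insert (weaken_insert h)) mem_insert

theorem circN_succ_of_clash_imp {j : ℕ} {β γ : Fm}
    (ih : ∀ Δ : Set Fm, Lnk n k Δ (circN j γ).clash → Lnk n k Δ (circN j β).clash)
    (h : Lnk n k Γ (circN (j + 1) β)) : Lnk n k Γ (circN (j + 1) γ) :=
  or_elim (.ciw (circN j γ)) mem_insert
    (explosion_of_clash (weaken_insert h) (ih _ mem_insert))

theorem clash_circN_neg_iff {j : ℕ} (hj : j < k) :
    Lnk n k Γ (circN j a.neg).clash ↔ Lnk n k Γ (circN j a).clash := by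
  induction j generalizing Γ with
  | zero =>
    exact ⟨fun h => and_intro ((Lnk.cf a (by omega)).mp (and_right h)) (and_left h),
      fun h => and_intro (and_right h) ((Lnk.ce a (by omega)).mp (and_left h))⟩
  | succ j ih =>
    have hip : Lnk n k Γ (Fm.biim (circN (j + 1) a.neg).neg (circN (j + 1) a).neg) :=
      .ip a (j + 1) (by omega) hj
    have ih' (Δ : Set Fm) := ih (Γ := Δ) (by omega)
    exact ⟨fun h => and_intro (circN_succ_of_clash_imp (fun Δ => (ih' Δ).2) (and_left h))
        ((and_left hip).mp (and_right h)),
      fun h => and_intro (circN_succ_of_clash_imp (fun Δ => (ih' Δ).1) (and_left h))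
        ((and_right hip).mp (and_right h))⟩

theorem ip_of_lt {j : ℕ} (hn : n < k) (hj : 1 ≤ j) :
    Lnk n k Γ (Fm.biim (circN j a.neg).neg (circN j a).neg) := by
  rcases lt_or_ge j k with hjk | hjk
  · exact .ip a j hj hjk
  rcases (show j = n + 1 ∨ n + 2 ≤ j by omega) with rfl | hj
  · exact biim_intro_s19
      (neg_circN_succ_of_clash ((clash_circN_neg_iff hn).1 (clash_of_neg_circN_succ mem_insert)))
      (neg_circN_succ_of_clash ((clash_circN_neg_iff hn).2 (clash_of_neg_circN_succ mem_insert)))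
  · exact biim_intro_s19 (of_neg_circN hj mem_insert) (of_neg_circN hj mem_insert)

theorem of_lt_level (hk' : n < k') (h : Lnk n k Γ a) : Lnk n k' Γ a :=
  transfer subset_rfl (fun _ => by omega) (fun _ _ hj _ => ip_of_lt hk' hj) h

end Lnk

/-- Fixed Point Theorem: for every n ≥ 0 and m ≥ n+2, L_n^{n+1} = L_n^m. -/
theorem stmt19 (n m : Nat) (hm : n + 2 ≤ m) (Γ : Set Fm) (α : Fm) :
    Lnk n (n + 1) Γ α ↔ Lnk n m Γ α :=
  ⟨Lnk.of_lt_level (by omega), Lnk.of_lt_level (by omega)⟩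
end
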